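/- arXiv:2001.04294 — 6 statements merged into one kernel-verified Lean document; each statement's English description precedes it below -/
import Mathlib

section
/- Let w : [0,∞) → ℝ be continuous, let m_1, m_2 : [0,∞) → ℝ be differentiable with m_1'(s) = w(s) m_1(s) and m_2'(s) = 2 w(s) m_2(s) for all s ≥ 0, with m_2(0) > 0, and define 𝕍(t) = m_2(t) − m_1(t)² with 𝕍(0) > 0. If m_2(t) < m_2(0) at a fixed time t (local energy bound), then 𝕍(t) < 𝕍(0) (local aggregation). -/
/-- Zero bias: local energy bound implies local aggregation, i.e. if the energy at
time `t` is below its initial value then so is the variance. -/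
theorem zero_bias_local_energy_bound_implies_local_aggregation
    (w m1 m2 : ℝ → ℝ) (hw : Continuous w)
    (hm1 : ∀ s : ℝ, 0 ≤ s → HasDerivAt m1 (w s * m1 s) s)
    (hm2 : ∀ s : ℝ, 0 ≤ s → HasDerivAt m2 (2 * w s * m2 s) s)
    (hm20 : 0 < m2 0) (hV0 : 0 < m2 0 - (m1 0) ^ 2) :
    ∀ t : ℝ, 0 ≤ t → m2 t < m2 0 → m2 t - (m1 t) ^ 2 < m2 0 - (m1 0) ^ 2 := by
  intro t ht hlt
  set h : ℝ → ℝ := fun s => m1 s ^ 2 * m2 0 - m1 0 ^ 2 * m2 s with hh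
  have hderiv : ∀ x ∈ Set.Ico (0:ℝ) t, HasDerivAt h (2 * w x * h x) x := by
    intro x hx
    have h1 := ((hm1 x hx.1).pow 2).mul_const (m2 0)
    have h2 := (hm2 x hx.1).const_mul (m1 0 ^ 2)
    have : HasDerivAt (fun y => m1 y ^ 2 * m2 0 - m1 0 ^ 2 * m2 y) (2 * m1 x ^ (2 - 1) * (w x * m1 x) * m2 0 - m1 0 ^ 2 * (2 * w x * m2 x)) x := h1.sub h2
    convert this using 1
    simp only [hh]
    ring
  -- bound on |2 w| on [0,t]
  obtain ⟨K, hK⟩ := (isCompact_Icc (a := (0:ℝ)) (b := t)).exists_bound_of_continuousOn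
    ((continuous_const.mul hw).continuousOn (s := Set.Icc 0 t))
  have hcont : ContinuousOn h (Set.Icc 0 t) := by
    apply ContinuousOn.sub
    · exact ContinuousOn.mul (ContinuousOn.pow (fun x hx => (hm1 x hx.1).continuousAt.continuousWithinAt) 2) continuousOn_const
    · exact continuousOn_const.mul (fun x hx => (hm2 x hx.1).continuousAt.continuousWithinAt)
  have h0 : h 0 = 0 := by simp only [hh]; ring
  have key : ∀ x ∈ Set.Icc (0:ℝ) t, ‖h x‖ ≤ gronwallBound 0 K 0 (x - 0) := by
    apply norm_le_gronwallBound_of_norm_deriv_right_le hcont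
      (fun x hx => (hderiv x hx).hasDerivWithinAt)
    · simp [h0]
    · intro x hx
      have hb := hK x ⟨hx.1, hx.2.le⟩
      have : ‖2 * w x * h x‖ = ‖(2 * w x)‖ * ‖h x‖ := norm_mul _ _
      rw [this]
      have : ‖(2 * w x)‖ ≤ K := hb
      nlinarith [norm_nonneg (h x)]
  have hht : h t = 0 := by
    have := key t ⟨ht, le_refl t⟩
    rw [gronwallBound_ε0] at this
    simp at this
    exact norm_le_zero_iff.mp (by simpa using this)
  have heq : m1 t ^ 2 * m2 0 = m1 0 ^ 2 * m2 t := by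
    have : m1 t ^ 2 * m2 0 - m1 0 ^ 2 * m2 t = 0 := hht
    linarith
  nlinarith [heq, hV0, hm20, hlt]
end

section
/- Let w : [0,∞) → ℝ be continuous, let m_1, m_2 : [0,∞) → ℝ be differentiable with m_1'(s) = w(s) m_1(s) and m_2'(s) = 2 w(s) m_2(s) for all s ≥ 0, with m_2(0) > 0, and define 𝕍(t) = m_2(t) − m_1(t)² with 𝕍(0) > 0. If m_2 is strictly decreasing (energy decay), then 𝕍 is strictly decreasing, i.e. 𝕍(t_1) > 𝕍(t_2) for all 0 ≤ t_1 < t_2 (aggregation). -/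
/-- Zero bias: energy decay implies aggregation, i.e. if the second moment is
strictly decreasing then so is the variance. -/
theorem zero_bias_energy_decay_implies_aggregation
    (w m1 m2 : ℝ → ℝ) (hw : Continuous w)
    (hm1 : ∀ s : ℝ, 0 ≤ s → HasDerivAt m1 (w s * m1 s) s)
    (hm2 : ∀ s : ℝ, 0 ≤ s → HasDerivAt m2 (2 * w s * m2 s) s)
    (hm20 : 0 < m2 0) (hV0 : 0 < m2 0 - (m1 0) ^ 2)
    (hdec : ∀ t1 t2 : ℝ, 0 ≤ t1 → t1 < t2 → m2 t2 < m2 t1) :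
    ∀ t1 t2 : ℝ, 0 ≤ t1 → t1 < t2 →
      m2 t2 - (m1 t2) ^ 2 < m2 t1 - (m1 t1) ^ 2 := by
  intro t1 t2 ht1 h12
  set h : ℝ → ℝ := fun t =>
    (m2 t - (m1 t) ^ 2) * m2 0 - (m2 0 - (m1 0) ^ 2) * m2 t with hh
  have hI : ∀ s : ℝ, HasDerivAt (fun t => ∫ u in (0:ℝ)..t, 2 * w u) (2 * w s) s := by
    intro s
    exact intervalIntegral.integral_hasDerivAt_right
      (((continuous_const.mul hw : Continuous fun u => 2 * w u)).intervalIntegrable 0 s)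
      (((continuous_const.mul hw : Continuous fun u => 2 * w u)).stronglyMeasurableAtFilter _ _)
      ((continuous_const.mul hw : Continuous fun u => 2 * w u)).continuousAt
  have hhderiv : ∀ s : ℝ, 0 ≤ s → HasDerivAt h (2 * w s * h s) s := by
    intro s hs
    have d1 := ((hm2 s hs).sub ((hm1 s hs).pow 2)).mul_const (m2 0)
    have d2 := (hm2 s hs).const_mul (m2 0 - (m1 0) ^ 2)
    have := d1.sub d2
    refine this.congr_deriv ?_
    simp only [hh]
    ring
  have hF : ∀ s : ℝ, 0 ≤ s → HasDerivAt
      (fun t => h t * Real.exp (-(∫ u in (0:ℝ)..t, 2 * w u))) 0 s := by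
    intro s hs
    have hexp : HasDerivAt (fun t => Real.exp (-(∫ u in (0:ℝ)..t, 2 * w u)))
        (-(2 * w s) * Real.exp (-(∫ u in (0:ℝ)..s, 2 * w u))) s := by
      have := (Real.hasDerivAt_exp (-(∫ u in (0:ℝ)..s, 2 * w u))).comp s ((hI s).neg)
      simpa [mul_comm, Function.comp_def, Pi.neg_def] using this
    have := (hhderiv s hs).mul hexp
    refine this.congr_deriv ?_
    ring
  have key : ∀ t ∈ Set.Icc (0:ℝ) t2,
      h t * Real.exp (-(∫ u in (0:ℝ)..t, 2 * w u))
        = h 0 * Real.exp (-(∫ u in (0:ℝ)..(0:ℝ), 2 * w u)) := by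
    apply constant_of_has_deriv_right_zero
    · intro x hx
      exact (hF x hx.1).continuousAt.continuousWithinAt
    · intro x hx
      exact (hF x hx.1).hasDerivWithinAt
  have hzero : ∀ t ∈ Set.Icc (0:ℝ) t2, h t = 0 := by
    intro t ht
    have := key t ht
    have h0 : h 0 = 0 := by simp only [hh]; ring
    rw [h0] at this
    have := mul_eq_zero.mp (by linarith [this] : h t * Real.exp (-(∫ u in (0:ℝ)..t, 2 * w u)) = 0)
    rcases this with h' | h'
    · exact h'
    · exact absurd h' (Real.exp_ne_zero _)
  have h1 := hzero t1 ⟨ht1, le_of_lt h12⟩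
  have h2 := hzero t2 ⟨le_trans ht1 (le_of_lt h12), le_refl _⟩
  simp only [hh] at h1 h2
  have hd := hdec t1 t2 ht1 h12
  nlinarith [hm20, hV0]
end

section
/- Let w : [0,∞) → ℝ be continuous, let m_1, m_2 : [0,∞) → ℝ be differentiable satisfying m_1'(t) = w(t) m_1(t) + b(t) and m_2'(t) = 2 ( w(t) m_2(t) + b(t) m_1(t) ) with conservative bias b(t) = −w(t) m_1(t), define 𝕍(t) = m_2(t) − m_1(t)², and set Φ_2(t) = 2 ∫_0^t w(s) ds. If lim_{t→∞} Φ_2(t) = −∞ (which holds in particular when w(t) ≤ −c < 0 for all t and some c > 0), then lim_{t→∞} 𝕍(t) = 0 (clustering) while m_1(t) = m_1(0) for all t, so the distribution concentrates at the initial mean x = m_1(0). -/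
open Filter

lemma const_of_deriv_zero_nonneg (f : ℝ → ℝ)
    (hf : ∀ t : ℝ, 0 ≤ t → HasDerivAt f 0 t) :
    ∀ t : ℝ, 0 ≤ t → f t = f 0 := by
  intro t ht
  have hcont : ContinuousOn f (Set.Icc 0 t) := by
    intro x hx
    exact (hf x hx.1).continuousAt.continuousWithinAt
  have hderiv : ∀ x ∈ Set.Ico (0:ℝ) t, HasDerivWithinAt f 0 (Set.Ici x) x := by
    intro x hx
    exact (hf x hx.1).hasDerivWithinAt
  exact constant_of_has_deriv_right_zero hcont hderiv t ⟨ht, le_refl t⟩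

/-- Conservative bias `b = -w m₁`: if `Φ₂(t) = 2∫₀ᵗ w → -∞` (which holds in
particular when `w ≤ -c < 0`), then the variance tends to `0` (clustering) while
the first moment stays constant, so the distribution concentrates at `x = m₁(0)`. -/
theorem conservative_bias_clustering
    (w m1 m2 b : ℝ → ℝ) (hw : Continuous w)
    (hb : ∀ t : ℝ, b t = -(w t * m1 t))
    (hm1 : ∀ t : ℝ, 0 ≤ t → HasDerivAt m1 (w t * m1 t + b t) t)
    (hm2 : ∀ t : ℝ, 0 ≤ t → HasDerivAt m2 (2 * (w t * m2 t + b t * m1 t)) t) :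
    (∀ c : ℝ, 0 < c → (∀ t : ℝ, 0 ≤ t → w t ≤ -c) →
      Tendsto (fun t => 2 * ∫ s in (0 : ℝ)..t, w s) atTop atBot) ∧
    (Tendsto (fun t => 2 * ∫ s in (0 : ℝ)..t, w s) atTop atBot →
      Tendsto (fun t => m2 t - (m1 t) ^ 2) atTop (nhds 0)) ∧
    (∀ t : ℝ, 0 ≤ t → m1 t = m1 0) := by
  set F : ℝ → ℝ := fun t => ∫ s in (0 : ℝ)..t, w s with hFdef
  have hF : ∀ t : ℝ, HasDerivAt F (w t) t := fun t =>
    intervalIntegral.integral_hasDerivAt_right (hw.intervalIntegrable 0 t)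
      (hw.stronglyMeasurableAtFilter _ _) hw.continuousAt
  -- m1 is constant on [0,∞)
  have hm1' : ∀ t : ℝ, 0 ≤ t → HasDerivAt m1 0 t := by
    intro t ht
    have := hm1 t ht
    rwa [hb, add_neg_cancel] at this
  have hm1c : ∀ t : ℝ, 0 ≤ t → m1 t = m1 0 := const_of_deriv_zero_nonneg m1 hm1'
  -- variance ODE: V' = 2 w V
  set V : ℝ → ℝ := fun t => m2 t - (m1 t) ^ 2 with hVdef
  have hV : ∀ t : ℝ, 0 ≤ t → HasDerivAt V (2 * w t * V t) t := by
    intro t ht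
    have h := (hm2 t ht).sub ((hm1 t ht).pow 2)
    refine h.congr_deriv ?_
    simp only [hVdef, hb]
    ring
  -- g = V * exp(-2F) is constant on [0,∞)
  set g : ℝ → ℝ := fun t => V t * Real.exp (-(2 * F t)) with hgdef
  have hg : ∀ t : ℝ, 0 ≤ t → HasDerivAt g 0 t := by
    intro t ht
    have he : HasDerivAt (fun t => Real.exp (-(2 * F t)))
        (Real.exp (-(2 * F t)) * (-(2 * w t))) t :=
      (((hF t).const_mul 2).neg).exp
    have h := (hV t ht).mul he
    refine h.congr_deriv ?_
    ring
  have hgc := const_of_deriv_zero_nonneg g hg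
  have hF0 : F 0 = 0 := intervalIntegral.integral_same
  have hVeq : ∀ t : ℝ, 0 ≤ t → V t = V 0 * Real.exp (2 * F t) := by
    intro t ht
    have := hgc t ht
    simp only [hgdef, hF0, mul_zero, neg_zero, Real.exp_zero, mul_one] at this
    calc V t = (V t * Real.exp (-(2 * F t))) * Real.exp (2 * F t) := by
          rw [mul_assoc, ← Real.exp_add]; simp
      _ = V 0 * Real.exp (2 * F t) := by rw [this]
  refine ⟨?_, ?_, hm1c⟩
  · intro c hc hwc
    have hmono : ∀ t : ℝ, 0 ≤ t → 2 * F t ≤ 2 * (-c * t) := by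
      intro t ht
      have hint : F t ≤ ∫ s in (0:ℝ)..t, (-c) := by
        apply intervalIntegral.integral_mono_on ht (hw.intervalIntegrable 0 t)
          (intervalIntegrable_const)
        intro x hx
        exact hwc x hx.1
      simp at hint
      nlinarith
    have hlim : Tendsto (fun t : ℝ => 2 * (-c * t)) atTop atBot := by
      have : Tendsto (fun t : ℝ => (-(2 * c)) * t) atTop atBot :=
        Tendsto.const_mul_atTop_of_neg (by nlinarith) tendsto_id
      exact this.congr (fun t => by ring)
    exact tendsto_atBot_mono' atTop (eventually_atTop.2 ⟨0, hmono⟩) hlim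
  · intro hPhi
    have hexp : Tendsto (fun t => Real.exp (2 * F t)) atTop (nhds 0) :=
      Real.tendsto_exp_atBot.comp hPhi
    have : Tendsto (fun t => V 0 * Real.exp (2 * F t)) atTop (nhds 0) := by
      simpa using hexp.const_mul (V 0)
    apply this.congr' ?_ |>.mono_right le_rfl
    filter_upwards [eventually_ge_atTop (0:ℝ)] with t ht
    exact (hVeq t ht).symm
end

section
/- Let w : [0,∞) → ℝ be continuous, let m_1, m_2 : [0,∞) → ℝ be differentiable satisfying m_1'(t) = w(t) m_1(t) + b(t) and m_2'(t) = 2 ( w(t) m_2(t) + b(t) m_1(t) ) with conservative bias b(t) = −w(t) m_1(t), define 𝕍(t) = m_2(t) − m_1(t)² with 𝕍(0) > 0, and set Φ_2(t) = 2 ∫_0^t w(s) ds. Let V > 0 be a tolerance. Then: (i) if V > m_1(0)² and Φ_2(t) < ln( (V − m_1(0)²) / 𝕍(0) ) at time t, then m_2(t) < V; and (ii) if Φ_2(t) < ln( V / 𝕍(0) ) at time t, then 𝕍(t) < V. -/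
/-- Conservative bias `b = -w m₁`: explicit conditions on `Φ₂` such that the energy,
respectively the variance, is below a given tolerance `V` at time `t`. -/
theorem conservative_bias_tolerance_conditions
    (w m1 m2 b : ℝ → ℝ) (hw : Continuous w)
    (hb : ∀ t : ℝ, b t = -(w t * m1 t))
    (hm1 : ∀ t : ℝ, 0 ≤ t → HasDerivAt m1 (w t * m1 t + b t) t)
    (hm2 : ∀ t : ℝ, 0 ≤ t → HasDerivAt m2 (2 * (w t * m2 t + b t * m1 t)) t)
    (hV0 : 0 < m2 0 - (m1 0) ^ 2)
    (V : ℝ) (hV : 0 < V) :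
    (∀ t : ℝ, 0 ≤ t → (m1 0) ^ 2 < V →
      (2 * ∫ s in (0 : ℝ)..t, w s) < Real.log ((V - (m1 0) ^ 2) / (m2 0 - (m1 0) ^ 2)) →
      m2 t < V) ∧
    (∀ t : ℝ, 0 ≤ t →
      (2 * ∫ s in (0 : ℝ)..t, w s) < Real.log (V / (m2 0 - (m1 0) ^ 2)) →
      m2 t - (m1 t) ^ 2 < V) := by
  -- m1 has zero derivative on [0, ∞)
  have hm1' : ∀ t : ℝ, 0 ≤ t → HasDerivAt m1 0 t := by
    intro t ht
    have := hm1 t ht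
    rwa [hb t, add_neg_cancel] at this
  -- m1 is constant on [0, ∞)
  have hm1const : ∀ t : ℝ, 0 ≤ t → m1 t = m1 0 := by
    intro t ht
    have hcont : ContinuousOn m1 (Set.Icc 0 t) := fun x hx =>
      ((hm1' x hx.1).continuousAt).continuousWithinAt
    have hderiv : ∀ x ∈ Set.Ico (0 : ℝ) t, HasDerivWithinAt m1 0 (Set.Ici x) x :=
      fun x hx => (hm1' x hx.1).hasDerivWithinAt
    exact constant_of_has_deriv_right_zero hcont hderiv t ⟨ht, le_rfl⟩
  -- the antiderivative Φ of w
  set Φ : ℝ → ℝ := fun t => ∫ s in (0 : ℝ)..t, w s with hΦdef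
  have hΦ : ∀ t : ℝ, HasDerivAt Φ (w t) t := fun t =>
    (hw.integral_hasStrictDerivAt 0 t).hasDerivAt
  have hΦ0 : Φ 0 = 0 := intervalIntegral.integral_same
  -- the rescaled variance F = (m2 - m1²) exp(-2Φ) is constant on [0,∞)
  set F : ℝ → ℝ := fun t => (m2 t - m1 t ^ 2) * Real.exp (-(2 * Φ t)) with hFdef
  have hF' : ∀ t : ℝ, 0 ≤ t → HasDerivAt F 0 t := by
    intro t ht
    have h1 := hm1' t ht
    have h2 := hm2 t ht
    have hE : HasDerivAt (fun t => Real.exp (-(2 * Φ t)))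
        (Real.exp (-(2 * Φ t)) * (-(2 * w t))) t := by
      have : HasDerivAt (fun t => -(2 * Φ t)) (-(2 * w t)) t :=
        ((hΦ t).const_mul 2).neg
      exact (Real.hasDerivAt_exp _).comp t this
    have hv : HasDerivAt (fun t => m2 t - m1 t ^ 2)
        (2 * (w t * m2 t + b t * m1 t) - 2 * m1 t * 0) t :=
      h2.sub ((h1.pow 2).congr_deriv (by ring))
    have := hv.mul hE
    refine this.congr_deriv ?_
    rw [hb t]
    ring
  have hFconst : ∀ t : ℝ, 0 ≤ t → F t = F 0 := by
    intro t ht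
    have hcont : ContinuousOn F (Set.Icc 0 t) := fun x hx =>
      ((hF' x hx.1).continuousAt).continuousWithinAt
    exact constant_of_has_deriv_right_zero hcont
      (fun x hx => (hF' x hx.1).hasDerivWithinAt) t ⟨ht, le_rfl⟩
  -- explicit formula for the variance
  have hvar : ∀ t : ℝ, 0 ≤ t →
      m2 t - m1 t ^ 2 = (m2 0 - m1 0 ^ 2) * Real.exp (2 * Φ t) := by
    intro t ht
    have h := hFconst t ht
    simp only [hFdef, hΦ0, mul_zero, neg_zero, Real.exp_zero, mul_one] at h
    rw [← h, mul_assoc, ← Real.exp_add]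
    simp
  have key : ∀ t : ℝ, 0 ≤ t → ∀ C : ℝ, 0 < C →
      (2 * Φ t) < Real.log (C / (m2 0 - m1 0 ^ 2)) →
      m2 t - m1 t ^ 2 < C := by
    intro t ht C hC hlt
    have hx : Real.exp (2 * Φ t) < C / (m2 0 - m1 0 ^ 2) := by
      have := Real.exp_lt_exp.mpr hlt
      rwa [Real.exp_log (div_pos hC hV0)] at this
    rw [hvar t ht]
    calc (m2 0 - m1 0 ^ 2) * Real.exp (2 * Φ t)
        < (m2 0 - m1 0 ^ 2) * (C / (m2 0 - m1 0 ^ 2)) := by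
          exact mul_lt_mul_of_pos_left hx hV0
      _ = C := by field_simp
  constructor
  · intro t ht hm hlt
    have := key t ht (V - m1 0 ^ 2) (by linarith) hlt
    have h1 := hm1const t ht
    rw [h1] at this
    linarith
  · intro t ht hlt
    exact key t ht V hV hlt
end

section
/- Let ν > 0, w, b ∈ ℝ, let σ : ℝ → ℝ be continuous, let I ⊆ ℝ be an open interval, let K : I → ℝ be differentiable with K(x) ≠ 0 for all x ∈ I, let G : I → ℝ be differentiable with G'(x) = 2 σ(w x + b) / (ν² K(x)²) for all x ∈ I, and let C ∈ ℝ. Then the function g(x) = (C / K(x)²) e^{G(x)} satisfies the zero-flux steady-state equation of the Fokker–Planck model: ( σ(w x + b) − (ν²/2) (K²)'(x) ) g(x) = (ν²/2) K(x)² g'(x) for all x ∈ I. -/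
/-- The general steady-state formula `g = (C/K²) exp(∫ 2σ(wx+b)/(ν²K²))` satisfies
the zero-flux steady-state equation of the Fokker–Planck model on an open interval. -/
theorem fokker_planck_steady_state_general
    (ν : ℝ) (hν : 0 < ν) (w b : ℝ) (σ : ℝ → ℝ) (hσ : Continuous σ)
    (I : Set ℝ) (hIopen : IsOpen I) (hIconn : I.OrdConnected)
    (K G : ℝ → ℝ)
    (hK : ∀ x ∈ I, DifferentiableAt ℝ K x)
    (hK0 : ∀ x ∈ I, K x ≠ 0)
    (hG : ∀ x ∈ I, HasDerivAt G (2 * σ (w * x + b) / (ν ^ 2 * (K x) ^ 2)) x)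
    (C : ℝ) :
    ∀ x ∈ I,
      (σ (w * x + b) - ν ^ 2 / 2 * deriv (fun y => (K y) ^ 2) x) *
          (C / (K x) ^ 2 * Real.exp (G x)) =
        ν ^ 2 / 2 * (K x) ^ 2 *
          deriv (fun y => C / (K y) ^ 2 * Real.exp (G y)) x := by
  intro x hx
  have hKx : HasDerivAt K (deriv K x) x := (hK x hx).hasDerivAt
  have hK2 : HasDerivAt (fun y => (K y) ^ 2) (2 * K x * deriv K x) x := by
    have := hKx.fun_pow 2
    simpa [mul_comm, mul_assoc] using this
  have hK2ne : (K x) ^ 2 ≠ 0 := pow_ne_zero 2 (hK0 x hx)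
  have hdiv : HasDerivAt (fun y => C / (K y) ^ 2)
      ((0 * (K x) ^ 2 - C * (2 * K x * deriv K x)) / ((K x) ^ 2) ^ 2) x :=
    (hasDerivAt_const x C).div hK2 hK2ne
  have hexp : HasDerivAt (fun y => Real.exp (G y))
      (Real.exp (G x) * (2 * σ (w * x + b) / (ν ^ 2 * (K x) ^ 2))) x :=
    (hG x hx).exp
  have hg := hdiv.fun_mul hexp
  rw [hK2.deriv, hg.deriv]
  have hν2 : ν ^ 2 ≠ 0 := pow_ne_zero 2 hν.ne'
  have hKne := hK0 x hx
  field_simp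
  ring
end

section
/- Let ν > 0, w < 0, b > 0, and set a = −b/w > 0. Define the Pareto density g : [a,∞) → ℝ by g(x) = a / x². Then g is a steady state of the Fokker–Planck neural network model with ReLU activation σ_R(x) = max{0, x} and linear diffusion K(x) = x on the region x > a: (i) ∫_a^∞ g(x) dx = 1, and (ii) for all x > a one has max{0, w x + b} = 0 and ( max{0, w x + b} − ν² x ) g(x) = (ν²/2) x² g'(x). -/
/-- Pareto steady state of the Fokker–Planck neural network model with ReLU activation
`σ_R(x) = max{0,x}` and linear diffusion `K(x) = x`: with `a = -b/w > 0`, the density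
`g(x) = a/x²` is normalized on `(a,∞)`, the activation term vanishes there, and `g`
satisfies the zero-flux equation `(σ_R(wx+b) - ν²x) g = (ν²/2) x² g'`. -/
theorem fokker_planck_pareto_steady_state
    (ν w b : ℝ) (hν : 0 < ν) (hw : w < 0) (hb : 0 < b) :
    let a : ℝ := -b / w
    let g : ℝ → ℝ := fun x => a / x ^ 2
    0 < a ∧
    (∫ x in Set.Ioi a, g x) = 1 ∧
    ∀ x : ℝ, a < x →
      max 0 (w * x + b) = 0 ∧
      (max 0 (w * x + b) - ν ^ 2 * x) * g x = ν ^ 2 / 2 * x ^ 2 * deriv g x := by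
  intro a g
  have ha : 0 < a := div_pos_of_neg_of_neg (neg_neg_of_pos hb) hw
  refine ⟨ha, ?_, ?_⟩
  · have hcong : ∀ x ∈ Set.Ioi a, g x = a * x ^ (-2 : ℝ) := by
      intro x hx
      have hx0 : 0 < x := ha.trans hx
      rw [Real.rpow_neg hx0.le, Real.rpow_two]
      simp [g, div_eq_mul_inv]
    rw [MeasureTheory.setIntegral_congr_fun measurableSet_Ioi hcong,
      MeasureTheory.integral_const_mul, integral_Ioi_rpow_of_lt (by norm_num) ha]
    have : (-2 : ℝ) + 1 = -1 := by norm_num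
    rw [this]
    rw [Real.rpow_neg_one]
    field_simp
  · intro x hx
    have hx0 : 0 < x := ha.trans hx
    have hmax : max 0 (w * x + b) = 0 := by
      have hwa : w * a = -b := by rw [mul_comm]; exact div_mul_cancel₀ _ hw.ne
      have : w * x < w * a := (mul_lt_mul_left_of_neg hw).mpr hx
      rw [hwa] at this
      exact max_eq_left (by linarith)
    refine ⟨hmax, ?_⟩
    have hd : HasDerivAt g (-2 * a / x ^ 3) x := by
      have h1 : HasDerivAt (fun y : ℝ => y ^ 2) (2 * x) x := by
        simpa using (hasDerivAt_pow 2 x)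
      have h2 := (hasDerivAt_const x a).div h1 (by positivity : (x:ℝ) ^ 2 ≠ 0)
      exact h2.congr_deriv (by rw [div_eq_div_iff (by positivity) (by positivity)]; ring)
    rw [hd.deriv, hmax]
    have hx2 : (x:ℝ)^2 ≠ 0 := by positivity
    have hx3 : (x:ℝ)^3 ≠ 0 := by positivity
    simp only [g]
    have : (0 - ν ^ 2 * x) * (a / x ^ 2) = ((0 - ν ^ 2 * x) * a) / x ^ 2 := by ring
    rw [this, show ν ^ 2 / 2 * x ^ 2 * (-2 * a / x ^ 3) = (ν ^ 2 / 2 * x ^ 2 * (-2 * a)) / x ^ 3 by ring, div_eq_div_iff hx2 hx3]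
    ring
end
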